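/- Let (A,C)_ψ be an entwining structure with C finitely generated projective over k, and X = C^{*op}#_ψ̄A. Then the category of entwined (A,C)_ψ-modules is isomorphic to the category of right X-modules: every entwined module M becomes an X-module via m·(ξ⊗a) = m₍₀₎·a ⟨m₍₁₎, ξ⟩, and conversely every right X-module becomes an entwined module with coaction determined by ⟨m₍₁₎, ξ⟩ m₍₀₎ = m·ξ; these assignments are mutually inverse and identity on morphisms. -/

import Mathlib

/-!
A finite dual basis `(bᵢ, dᵢ)` of `C` identifies `M ⊗ C` with `Hom(C*, M)`: a tensor is
determined by its contractions against all `ξ ∈ C*`, and every `C*`-action `m ↦ m·ξ` is the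
contraction of the coaction `m ↦ ∑ m·dᵢ ⊗ bᵢ`. Under this dictionary, counitality and
coassociativity of the coaction become unitality and associativity of the `C^{*op}`-action,
while the entwining condition, contracted with `ξ`, reads `(m·a)·ξ = m·ψ̄(a ⊗ ξ)`, which is the
rule `(ε ⊗ a)(ξ ⊗ 1) = ψ̄(a ⊗ ξ)` of the smash product. The factorisation identity is exactly
what turns `ψ` into `ψ̄` here, and it determines `ψ̄` because `C* ⊗ A → Hom(C, A)` is injective.
-/

open TensorProduct LinearMap

noncomputable section

variable (k A C : Type*) [CommRing k] [Ring A] [Algebra k A]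
  [AddCommGroup C] [Module k C] [Coalgebra k C]

/-- An entwining structure `(A,C)_ψ` over `k`. -/
structure Entwining where
  psi : C ⊗[k] A →ₗ[k] A ⊗[k] C
  mul_compat :
    psi ∘ₗ lTensor C (LinearMap.mul' k A)
      = rTensor C (LinearMap.mul' k A)
        ∘ₗ (TensorProduct.assoc k A A C).symm.toLinearMap
        ∘ₗ lTensor A psi
        ∘ₗ (TensorProduct.assoc k A C A).toLinearMap
        ∘ₗ rTensor A psi
        ∘ₗ (TensorProduct.assoc k C A A).symm.toLinearMap
  one_compat : ∀ c : C, psi (c ⊗ₜ[k] (1 : A)) = (1 : A) ⊗ₜ[k] c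
  comul_compat :
    lTensor A (Coalgebra.comul (R := k) (A := C)) ∘ₗ psi
      = (TensorProduct.assoc k A C C).toLinearMap
        ∘ₗ rTensor C psi
        ∘ₗ (TensorProduct.assoc k C A C).symm.toLinearMap
        ∘ₗ lTensor C psi
        ∘ₗ (TensorProduct.assoc k C C A).toLinearMap
        ∘ₗ rTensor A (Coalgebra.comul (R := k) (A := C))
  counit_compat : ∀ (c : C) (a : A),
    (TensorProduct.rid k A)
        ((lTensor A (Coalgebra.counit (R := k) (A := C))) (psi (c ⊗ₜ[k] a)))
      = Coalgebra.counit (R := k) c • a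

variable {k A C} in
/-- `act` is a unital associative right `A`-action on `M`. -/
def IsRAction {M : Type*} [AddCommGroup M] [Module k M]
    (act : M ⊗[k] A →ₗ[k] M) : Prop :=
  (∀ m : M, act (m ⊗ₜ[k] (1 : A)) = m) ∧
  act ∘ₗ lTensor M (LinearMap.mul' k A)
    = act ∘ₗ rTensor A act ∘ₗ (TensorProduct.assoc k M A A).symm.toLinearMap

variable {k A C} in
/-- `coact` is a counital coassociative right `C`-coaction on `M`. -/
def IsRCoaction {M : Type*} [AddCommGroup M] [Module k M]
    (coact : M →ₗ[k] M ⊗[k] C) : Prop :=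
  (∀ m : M, (TensorProduct.rid k M)
      ((lTensor M (Coalgebra.counit (R := k) (A := C))) (coact m)) = m) ∧
  rTensor C coact ∘ₗ coact
    = (TensorProduct.assoc k M C C).symm.toLinearMap
      ∘ₗ lTensor M (Coalgebra.comul (R := k) (A := C)) ∘ₗ coact

variable {k A C} in
/-- The compatibility condition making `(M, act, coact)` an entwined
`(A,C)_ψ`-module: `ρ^M(m·a) = m₍₀₎·a_α ⊗ m₍₁₎^α`. -/
def IsEntwinedModule (E : Entwining k A C) {M : Type*} [AddCommGroup M] [Module k M]
    (act : M ⊗[k] A →ₗ[k] M) (coact : M →ₗ[k] M ⊗[k] C) : Prop :=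
  IsRAction act ∧ IsRCoaction coact ∧
  coact ∘ₗ act
    = rTensor C act
      ∘ₗ (TensorProduct.assoc k M A C).symm.toLinearMap
      ∘ₗ lTensor M E.psi
      ∘ₗ (TensorProduct.assoc k M C A).toLinearMap
      ∘ₗ rTensor A coact

variable {k A C} in
/-- A morphism of entwined modules: right `A`-linear and right `C`-colinear. -/
def IsEntwinedHom {M N : Type*} [AddCommGroup M] [Module k M]
    [AddCommGroup N] [Module k N]
    (actM : M ⊗[k] A →ₗ[k] M) (coactM : M →ₗ[k] M ⊗[k] C)
    (actN : N ⊗[k] A →ₗ[k] N) (coactN : N →ₗ[k] N ⊗[k] C)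
    (f : M →ₗ[k] N) : Prop :=
  (f ∘ₗ actM = actN ∘ₗ rTensor A f) ∧ (coactN ∘ₗ f = rTensor C f ∘ₗ coactM)

variable {k A C} in
/-- Evaluation of the first (dual) factor at `c`: `ξ ⊗ a ↦ ξ(c) • a`. -/
def evFst (c : C) : Module.Dual k C ⊗[k] A →ₗ[k] A :=
  TensorProduct.lift ((LinearMap.lsmul k A) ∘ₗ
    (LinearMap.applyₗ (R := k) c : (C →ₗ[k] k) →ₗ[k] k))

variable {k A C} in
/-- Evaluation of the second (coalgebra) factor against `ξ`: `a ⊗ c ↦ ξ(c) • a`. -/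
def evSnd (ξ : Module.Dual k C) : A ⊗[k] C →ₗ[k] A :=
  (TensorProduct.rid k A).toLinearMap ∘ₗ lTensor A ξ

variable {k A C} in
/-- `ψ̄ : A ⊗ C* → C* ⊗ A` is a factorisation map for the entwining `ψ`:
`⟨c^α, ξ⟩ a_α = ξ_i(c) a^i`. -/
def IsFactorisation (E : Entwining k A C)
    (ψbar : A ⊗[k] Module.Dual k C →ₗ[k] Module.Dual k C ⊗[k] A) : Prop :=
  ∀ (a : A) (ξ : Module.Dual k C) (c : C),
    evFst c (ψbar (a ⊗ₜ[k] ξ)) = evSnd ξ (E.psi (c ⊗ₜ[k] a))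

/-- The product of `B = C^{*op}`, i.e. the opposite convolution product:
`⟨c, b b'⟩ = ⟨c₍₂₎, b⟩ ⟨c₍₁₎, b'⟩`, as a linear map `B ⊗ B →ₗ B`. -/
def opConv : Module.Dual k C ⊗[k] Module.Dual k C →ₗ[k] Module.Dual k C :=
  ((LinearMap.llcomp k C (C ⊗[k] C) k).flip (Coalgebra.comul (R := k) (A := C)))
  ∘ₗ (LinearMap.llcomp k (C ⊗[k] C) (k ⊗[k] k) k (LinearMap.mul' k k))
  ∘ₗ TensorProduct.homTensorHomMap (RingHom.id k) C C k k
  ∘ₗ (TensorProduct.comm k (Module.Dual k C) (Module.Dual k C)).toLinearMap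

variable {k A C} in
/-- The multiplication of the smash product `B #_ψ̄ A` on `B ⊗ A`, `B = C^{*op}`:
`(b ⊗ a)(b' ⊗ a') = b ψ̄(a ⊗ b') a'`. -/
def smashMul (ψbar : A ⊗[k] Module.Dual k C →ₗ[k] Module.Dual k C ⊗[k] A) :
    (Module.Dual k C ⊗[k] A) ⊗[k] (Module.Dual k C ⊗[k] A) →ₗ[k]
      Module.Dual k C ⊗[k] A :=
  rTensor A (opConv k C)
  ∘ₗ (TensorProduct.assoc k (Module.Dual k C) (Module.Dual k C) A).symm.toLinearMap
  ∘ₗ lTensor (Module.Dual k C) (lTensor (Module.Dual k C) (LinearMap.mul' k A))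
  ∘ₗ lTensor (Module.Dual k C) (TensorProduct.assoc k (Module.Dual k C) A A).toLinearMap
  ∘ₗ lTensor (Module.Dual k C) (rTensor A ψbar)
  ∘ₗ lTensor (Module.Dual k C) (TensorProduct.assoc k A (Module.Dual k C) A).symm.toLinearMap
  ∘ₗ (TensorProduct.assoc k (Module.Dual k C) A (Module.Dual k C ⊗[k] A)).toLinearMap

/-- The unit `ε ⊗ 1_A` of the smash product. -/
def smashOne : Module.Dual k C ⊗[k] A :=
  (Coalgebra.counit (R := k) (A := C)) ⊗ₜ[k] (1 : A)

variable {k A C} in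
/-- The map `X ⊗ B → X` underlying the right `X`-action on `Hom(B,N)`:
`(b ⊗ a) ⊗ b' ↦ (b b'_i) ⊗ a^i` where `ψ̄(a ⊗ b') = b'_i ⊗ a^i`. -/
def homActAux (ψbar : A ⊗[k] Module.Dual k C →ₗ[k] Module.Dual k C ⊗[k] A) :
    (Module.Dual k C ⊗[k] A) ⊗[k] Module.Dual k C →ₗ[k]
      Module.Dual k C ⊗[k] A :=
  rTensor A (opConv k C)
  ∘ₗ (TensorProduct.assoc k (Module.Dual k C) (Module.Dual k C) A).symm.toLinearMap
  ∘ₗ lTensor (Module.Dual k C) ψbar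
  ∘ₗ (TensorProduct.assoc k (Module.Dual k C) A (Module.Dual k C)).toLinearMap

variable {k A C} in
/-- The right `X`-action on `Hom(B,N)` (`X = B #_ψ̄ A`, `B = C^{*op}`, `N` a
right `A`-module): `(f · (b ⊗ a))(b') = f(b b'_i) · a^i`. -/
def homAct {N : Type*} [AddCommGroup N] [Module k N]
    (actN : N ⊗[k] A →ₗ[k] N)
    (ψbar : A ⊗[k] Module.Dual k C →ₗ[k] Module.Dual k C ⊗[k] A)
    (f : Module.Dual k C →ₗ[k] N) (x : Module.Dual k C ⊗[k] A) :
    Module.Dual k C →ₗ[k] N :=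
  actN ∘ₗ rTensor A f ∘ₗ homActAux ψbar
    ∘ₗ TensorProduct.mk k (Module.Dual k C ⊗[k] A) (Module.Dual k C) x

variable {k A C} in
/-- `actX` is a unital associative right action of the smash product
`X = B #_ψ̄ A` on `M`. -/
def IsSmashAction (ψbar : A ⊗[k] Module.Dual k C →ₗ[k] Module.Dual k C ⊗[k] A)
    {M : Type*} [AddCommGroup M] [Module k M]
    (actX : M ⊗[k] (Module.Dual k C ⊗[k] A) →ₗ[k] M) : Prop :=
  (∀ m : M, actX (m ⊗ₜ[k] smashOne k A C) = m) ∧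
  actX ∘ₗ lTensor M (smashMul ψbar)
    = actX ∘ₗ rTensor (Module.Dual k C ⊗[k] A) actX
      ∘ₗ (TensorProduct.assoc k M (Module.Dual k C ⊗[k] A)
          (Module.Dual k C ⊗[k] A)).symm.toLinearMap

variable {k A C} in
/-- `f : M → Hom(B,N)` is a morphism of right `X`-modules. -/
def IsHomBXLinear (ψbar : A ⊗[k] Module.Dual k C →ₗ[k] Module.Dual k C ⊗[k] A)
    {M N : Type*} [AddCommGroup M] [Module k M] [AddCommGroup N] [Module k N]
    (actX : M ⊗[k] (Module.Dual k C ⊗[k] A) →ₗ[k] M)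
    (actN : N ⊗[k] A →ₗ[k] N)
    (f : M →ₗ[k] (Module.Dual k C →ₗ[k] N)) : Prop :=
  ∀ (m : M) (x : Module.Dual k C ⊗[k] A),
    f (actX (m ⊗ₜ[k] x)) = homAct actN ψbar (f m) x

variable {k A C} in
/-- The evaluation pairing `C ⊗ C* → k`. -/
def pairCD : C ⊗[k] Module.Dual k C →ₗ[k] k :=
  TensorProduct.lift (Module.Dual.eval k C)

variable {k A C} in
/-- The right `X`-action (`X = C^{*op} #_ψ̄ A`) induced on an entwined module:
`m · (ξ ⊗ a) = m₍₀₎ · a ⟨m₍₁₎, ξ⟩`. -/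
def inducedSmashAction {M : Type*} [AddCommGroup M] [Module k M]
    (actM : M ⊗[k] A →ₗ[k] M) (coactM : M →ₗ[k] M ⊗[k] C) :
    M ⊗[k] (Module.Dual k C ⊗[k] A) →ₗ[k] M :=
  actM
  ∘ₗ lTensor M (TensorProduct.lid k A).toLinearMap
  ∘ₗ lTensor M (rTensor A (pairCD (k := k) (C := C)))
  ∘ₗ lTensor M (TensorProduct.assoc k C (Module.Dual k C) A).symm.toLinearMap
  ∘ₗ (TensorProduct.assoc k M C (Module.Dual k C ⊗[k] A)).toLinearMap
  ∘ₗ rTensor (Module.Dual k C ⊗[k] A) coactM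

open Module (Dual)

section Contraction

variable {R V M N : Type*} [CommRing R] [AddCommGroup V] [Module R V]
  [AddCommGroup M] [Module R M] [AddCommGroup N] [Module R N]

def contractWith (ξ : Dual R V) : M ⊗[R] V →ₗ[R] M :=
  (TensorProduct.rid R M).toLinearMap ∘ₗ lTensor M ξ

@[simp] lemma contractWith_tmul (ξ : Dual R V) (m : M) (v : V) :
    contractWith ξ (m ⊗ₜ[R] v) = ξ v • m := by
  simp [contractWith]

lemma contractWith_rTensor (f : M →ₗ[R] N) (ξ : Dual R V) (t : M ⊗[R] V) :
    contractWith ξ (rTensor V f t) = f (contractWith ξ t) := by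
  induction t using TensorProduct.induction_on with
  | zero => simp
  | tmul m v => simp
  | add x y hx hy => simp [hx, hy]

lemma lTensor_dualTensorHom_tmul (ξ : Dual R V) (n : N) (t : M ⊗[R] V) :
    lTensor M (dualTensorHom R V N (ξ ⊗ₜ n)) t = contractWith ξ t ⊗ₜ n := by
  induction t using TensorProduct.induction_on with
  | zero => simp
  | tmul m v => simp [TensorProduct.smul_tmul]
  | add x y hx hy => simp [hx, hy, add_tmul]

lemma mul'_map_eq_contractWith (ξ η : Dual R V) (t : V ⊗[R] V) :
    LinearMap.mul' R R (TensorProduct.map ξ η t) = ξ (contractWith η t) := by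
  induction t using TensorProduct.induction_on with
  | zero => simp
  | tmul v w => simp [mul_comm]
  | add x y hx hy => simp [hx, hy]

lemma mul'_map_eq_lid_rTensor (ξ η : Dual R V) (t : V ⊗[R] V) :
    LinearMap.mul' R R (TensorProduct.map ξ η t) = η (TensorProduct.lid R V (rTensor V ξ t)) := by
  induction t using TensorProduct.induction_on with
  | zero => simp
  | tmul v w => simp
  | add x y hx hy => simp [hx, hy]

end Contraction

section DualBasis

variable {R V M : Type*} [CommRing R] [AddCommGroup V] [Module R V]
  [AddCommGroup M] [Module R M]

def IsDualBasis {n : ℕ} (b : Fin n → V) (d : Fin n → Dual R V) : Prop :=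
  ∀ v : V, ∑ i, d i v • b i = v

lemma exists_isDualBasis [Module.Finite R V] [Module.Projective R V] :
    ∃ (n : ℕ) (b : Fin n → V) (d : Fin n → Dual R V), IsDualBasis b d := by
  classical
  obtain ⟨n, f, g, -, -, hfg⟩ := Module.Finite.exists_comp_eq_id_of_projective R V
  refine ⟨n, fun i => f (Pi.single i 1), fun i => LinearMap.proj i ∘ₗ g, fun v => ?_⟩
  have hv : f (g v) = v := by simpa using LinearMap.congr_fun hfg v
  conv_rhs => rw [← hv, f.pi_apply_eq_sum_univ]
  refine Finset.sum_congr rfl fun i _ => congrArg (g v i • f ·) (funext fun j => ?_)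
  simp [Pi.single_apply, eq_comm]

def coactionOfDualBasis {n : ℕ} (b : Fin n → V) (d : Fin n → Dual R V)
    (φ : M ⊗[R] Dual R V →ₗ[R] M) : M →ₗ[R] M ⊗[R] V :=
  ∑ i, (TensorProduct.mk R M V).flip (b i) ∘ₗ φ ∘ₗ (TensorProduct.mk R M (Dual R V)).flip (d i)

namespace IsDualBasis

variable {n : ℕ} {b : Fin n → V} {d : Fin n → Dual R V}

lemma sum_smul_dual (hbd : IsDualBasis b d) (ξ : Dual R V) : ∑ i, ξ (b i) • d i = ξ := by
  ext v
  conv_rhs => rw [← hbd v]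
  simp [mul_comm]

lemma sum_contractWith_tmul (hbd : IsDualBasis b d) (t : M ⊗[R] V) :
    ∑ i, contractWith (d i) t ⊗ₜ[R] b i = t := by
  induction t using TensorProduct.induction_on with
  | zero => simp
  | tmul m v =>
    simp only [contractWith_tmul, TensorProduct.smul_tmul, ← tmul_sum, hbd v]
  | add x y hx hy => simp [add_tmul, Finset.sum_add_distrib, hx, hy]

lemma tensor_ext (hbd : IsDualBasis b d) {s t : M ⊗[R] V}
    (h : ∀ i, contractWith (d i) s = contractWith (d i) t) : s = t := by
  rw [← hbd.sum_contractWith_tmul s, ← hbd.sum_contractWith_tmul t]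
  simp only [h]

lemma contractWith_coactionOfDualBasis (hbd : IsDualBasis b d)
    (φ : M ⊗[R] Dual R V →ₗ[R] M) (ξ : Dual R V) (m : M) :
    contractWith ξ (coactionOfDualBasis b d φ m) = φ (m ⊗ₜ ξ) := by
  conv_rhs => rw [← hbd.sum_smul_dual ξ]
  simp [coactionOfDualBasis, tmul_sum, tmul_smul]

lemma eq_coactionOfDualBasis (hbd : IsDualBasis b d) {φ : M ⊗[R] Dual R V →ₗ[R] M}
    {coact : M →ₗ[R] M ⊗[R] V} (h : ∀ m ξ, contractWith ξ (coact m) = φ (m ⊗ₜ ξ)) :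
    coact = coactionOfDualBasis b d φ :=
  LinearMap.ext fun m => hbd.tensor_ext fun i => by
    rw [h, hbd.contractWith_coactionOfDualBasis]

end IsDualBasis

end DualBasis

section Coalgebra

variable {k C}

lemma opConv_tmul_apply (ξ η : Dual k C) (c : C) :
    opConv k C (ξ ⊗ₜ η) c = η (contractWith ξ (Coalgebra.comul c)) := by
  simp [opConv, mul'_map_eq_contractWith]

lemma opConv_tmul_apply' (ξ η : Dual k C) (c : C) :
    opConv k C (ξ ⊗ₜ η) c = ξ (TensorProduct.lid k C (rTensor C η (Coalgebra.comul c))) := by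
  simp [opConv, mul'_map_eq_lid_rTensor]

@[simp] lemma opConv_counit_tmul (η : Dual k C) :
    opConv k C (Coalgebra.counit ⊗ₜ η) = η := by
  ext c
  simp [opConv_tmul_apply, contractWith, Coalgebra.lTensor_counit_comul]

@[simp] lemma opConv_tmul_counit (ξ : Dual k C) :
    opConv k C (ξ ⊗ₜ Coalgebra.counit) = ξ := by
  ext c
  simp [opConv_tmul_apply', Coalgebra.rTensor_counit_comul]

lemma contractWith_contractWith_comul {M : Type*} [AddCommGroup M] [Module k M]
    (ξ η : Dual k C) (t : M ⊗[k] C) :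
    contractWith η (contractWith ξ
        ((TensorProduct.assoc k M C C).symm (lTensor M Coalgebra.comul t)))
      = contractWith (opConv k C (ξ ⊗ₜ η)) t := by
  induction t using TensorProduct.induction_on with
  | zero => simp
  | tmul m c =>
    rw [lTensor_tmul, contractWith_tmul, opConv_tmul_apply]
    induction Coalgebra.comul (R := k) c using TensorProduct.induction_on with
    | zero => simp
    | tmul c₁ c₂ => simp [smul_smul]
    | add x y hx hy => simp [tmul_add, hx, hy, add_smul]
  | add x y hx hy => simp [hx, hy]

end Coalgebra

section Actions

variable {R S V M : Type*} [CommRing R] [Ring S] [Algebra R S] [AddCommGroup V] [Module R V]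
  [AddCommGroup M] [Module R M]

lemma IsRAction.act_act {act : M ⊗[R] S →ₗ[R] M} (h : IsRAction act) (m : M) (a b : S) :
    act (act (m ⊗ₜ a) ⊗ₜ b) = act (m ⊗ₜ (a * b)) := by
  simpa using (LinearMap.congr_fun h.2 (m ⊗ₜ (a ⊗ₜ b))).symm

@[simp] lemma evSnd_tmul (ξ : Dual R V) (a : S) (v : V) : evSnd ξ (a ⊗ₜ v) = ξ v • a := by
  simp [evSnd]

lemma evFst_eq_dualTensorHom (v : V) (y : Dual R V ⊗[R] S) :
    evFst v y = dualTensorHom R V S y v := by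
  induction y using TensorProduct.induction_on with
  | zero => simp
  | tmul ξ a => simp [evFst]
  | add x y hx hy => simp [hx, hy]

lemma contractWith_entwine (ψ : V ⊗[R] S →ₗ[R] S ⊗[R] V) (act : M ⊗[R] S →ₗ[R] M)
    (ξ : Dual R V) (t : M ⊗[R] V) (a : S) :
    contractWith ξ (rTensor V act ((TensorProduct.assoc R M S V).symm
        (lTensor M ψ (TensorProduct.assoc R M V S (t ⊗ₜ a)))))
      = act (lTensor M (evSnd ξ ∘ₗ ψ ∘ₗ (TensorProduct.mk R V S).flip a) t) := by
  induction t using TensorProduct.induction_on with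
  | zero => simp
  | tmul m v =>
    simp only [TensorProduct.assoc_tmul, lTensor_tmul, LinearMap.comp_apply, flip_apply,
      TensorProduct.mk_apply]
    induction ψ (v ⊗ₜ a) using TensorProduct.induction_on with
    | zero => simp
    | tmul b w => simp [tmul_smul]
    | add x y hx hy => simp [tmul_add, hx, hy]
  | add x y hx hy => simp [add_tmul, hx, hy]

lemma inducedSmashAction_apply (act : M ⊗[R] S →ₗ[R] M) (coact : M →ₗ[R] M ⊗[R] V)
    (m : M) (y : Dual R V ⊗[R] S) :
    inducedSmashAction act coact (m ⊗ₜ y) = act (lTensor M (dualTensorHom R V S y) (coact m)) := by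
  simp only [inducedSmashAction, LinearMap.comp_apply, rTensor_tmul, LinearEquiv.coe_coe]
  induction coact m using TensorProduct.induction_on with
  | zero => simp
  | tmul m' v =>
    simp only [TensorProduct.assoc_tmul, lTensor_tmul]
    congr 2
    induction y using TensorProduct.induction_on with
    | zero => simp
    | tmul ξ a => simp [pairCD]
    | add x y hx hy => simp_all [tmul_add]
  | add x y hx hy => simp [add_tmul, hx, hy]

lemma inducedSmashAction_tmul_tmul (act : M ⊗[R] S →ₗ[R] M) (coact : M →ₗ[R] M ⊗[R] V)
    (m : M) (ξ : Dual R V) (a : S) :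
    inducedSmashAction act coact (m ⊗ₜ (ξ ⊗ₜ a)) = act (contractWith ξ (coact m) ⊗ₜ a) := by
  rw [inducedSmashAction_apply, lTensor_dualTensorHom_tmul]

lemma IsRAction.inducedSmashAction_tmul_one {act : M ⊗[R] S →ₗ[R] M} (h : IsRAction act)
    (coact : M →ₗ[R] M ⊗[R] V) (m : M) (ξ : Dual R V) :
    inducedSmashAction act coact (m ⊗ₜ (ξ ⊗ₜ 1)) = contractWith ξ (coact m) := by
  rw [inducedSmashAction_tmul_tmul, h.1]

def restrictToDual (actX : M ⊗[R] (Dual R V ⊗[R] S) →ₗ[R] M) : M ⊗[R] Dual R V →ₗ[R] M :=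
  actX ∘ₗ lTensor M ((TensorProduct.mk R (Dual R V) S).flip 1)

@[simp] lemma restrictToDual_tmul (actX : M ⊗[R] (Dual R V ⊗[R] S) →ₗ[R] M) (m : M)
    (ξ : Dual R V) : restrictToDual actX (m ⊗ₜ ξ) = actX (m ⊗ₜ (ξ ⊗ₜ 1)) :=
  rfl

end Actions

section Entwined

variable {k A C} {M : Type*} [AddCommGroup M] [Module k M]

lemma IsRCoaction.contractWith_counit {coact : M →ₗ[k] M ⊗[k] C} (h : IsRCoaction coact)
    (m : M) : contractWith Coalgebra.counit (coact m) = m :=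
  h.1 m

lemma IsRCoaction.contractWith_coact_contractWith {coact : M →ₗ[k] M ⊗[k] C}
    (h : IsRCoaction coact) (ξ η : Dual k C) (m : M) :
    contractWith η (coact (contractWith ξ (coact m)))
      = contractWith (opConv k C (ξ ⊗ₜ η)) (coact m) := by
  have hm := LinearMap.congr_fun h.2 m
  simp only [LinearMap.comp_apply, LinearEquiv.coe_coe] at hm
  rw [← contractWith_rTensor, hm, contractWith_contractWith_comul]

lemma IsDualBasis.isRCoaction {n : ℕ} {b : Fin n → C} {d : Fin n → Dual k C}
    (hbd : IsDualBasis b d) {coact : M →ₗ[k] M ⊗[k] C}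
    (counit : ∀ m, contractWith Coalgebra.counit (coact m) = m)
    (coassoc : ∀ m ξ η, contractWith η (coact (contractWith ξ (coact m)))
      = contractWith (opConv k C (ξ ⊗ₜ η)) (coact m)) :
    IsRCoaction coact := by
  refine ⟨counit, LinearMap.ext fun m => hbd.tensor_ext fun i => hbd.tensor_ext fun j => ?_⟩
  simp only [LinearMap.comp_apply, LinearEquiv.coe_coe]
  rw [contractWith_rTensor, coassoc, contractWith_contractWith_comul]

lemma IsRCoaction.inducedSmashAction_counit_tmul {coact : M →ₗ[k] M ⊗[k] C}
    (h : IsRCoaction coact) (act : M ⊗[k] A →ₗ[k] M) (m : M) (a : A) :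
    inducedSmashAction act coact (m ⊗ₜ (Coalgebra.counit ⊗ₜ a)) = act (m ⊗ₜ a) := by
  rw [inducedSmashAction_tmul_tmul, h.contractWith_counit]

variable {E : Entwining k A C} {ψbar : A ⊗[k] Dual k C →ₗ[k] Dual k C ⊗[k] A}

lemma IsFactorisation.dualTensorHom_psibar (hfact : IsFactorisation E ψbar) (a : A)
    (ξ : Dual k C) :
    dualTensorHom k C A (ψbar (a ⊗ₜ ξ)) = evSnd ξ ∘ₗ E.psi ∘ₗ (TensorProduct.mk k C A).flip a := by
  ext c
  simpa [evFst_eq_dualTensorHom] using hfact a ξ c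

lemma IsEntwinedModule.contractWith_coact_act {act : M ⊗[k] A →ₗ[k] M}
    {coact : M →ₗ[k] M ⊗[k] C} (h : IsEntwinedModule E act coact)
    (hfact : IsFactorisation E ψbar) (m : M) (a : A) (ξ : Dual k C) :
    contractWith ξ (coact (act (m ⊗ₜ a))) = inducedSmashAction act coact (m ⊗ₜ ψbar (a ⊗ₜ ξ)) := by
  have hma := LinearMap.congr_fun h.2.2 (m ⊗ₜ a)
  simp only [LinearMap.comp_apply, LinearEquiv.coe_coe, rTensor_tmul] at hma
  rw [hma, contractWith_entwine, ← hfact.dualTensorHom_psibar, inducedSmashAction_apply]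

lemma IsDualBasis.isEntwinedModule {n : ℕ} {b : Fin n → C} {d : Fin n → Dual k C}
    (hbd : IsDualBasis b d) (hfact : IsFactorisation E ψbar) {act : M ⊗[k] A →ₗ[k] M}
    {coact : M →ₗ[k] M ⊗[k] C} (hact : IsRAction act) (hcoact : IsRCoaction coact)
    (compat : ∀ m a ξ, contractWith ξ (coact (act (m ⊗ₜ a)))
      = inducedSmashAction act coact (m ⊗ₜ ψbar (a ⊗ₜ ξ))) :
    IsEntwinedModule E act coact := by
  refine ⟨hact, hcoact, TensorProduct.ext' fun m a => hbd.tensor_ext fun i => ?_⟩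
  simp only [LinearMap.comp_apply, LinearEquiv.coe_coe, rTensor_tmul]
  rw [compat, contractWith_entwine, ← hfact.dualTensorHom_psibar, inducedSmashAction_apply]

end Entwined

section SmashProduct

variable {k A C}

lemma smashMul_tmul_tmul (ψbar : A ⊗[k] Dual k C →ₗ[k] Dual k C ⊗[k] A)
    (ξ η : Dual k C) (a b : A) :
    smashMul ψbar ((ξ ⊗ₜ a) ⊗ₜ (η ⊗ₜ b))
      = TensorProduct.map (opConv k C ∘ₗ TensorProduct.mk k (Dual k C) (Dual k C) ξ)
          (LinearMap.mulRight k b) (ψbar (a ⊗ₜ η)) := by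
  simp only [smashMul, LinearMap.comp_apply, LinearEquiv.coe_coe, TensorProduct.assoc_tmul,
    lTensor_tmul, TensorProduct.assoc_symm_tmul, rTensor_tmul]
  induction ψbar (a ⊗ₜ η) using TensorProduct.induction_on with
  | zero => simp
  | tmul η' a' => simp
  | add x y hx hy => simp only [add_tmul, tmul_add, map_add, hx, hy]

lemma smashMul_counit_tmul_tmul_one (ψbar : A ⊗[k] Dual k C →ₗ[k] Dual k C ⊗[k] A)
    (a : A) (ξ : Dual k C) :
    smashMul ψbar ((Coalgebra.counit ⊗ₜ a) ⊗ₜ (ξ ⊗ₜ 1)) = ψbar (a ⊗ₜ ξ) := by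
  have hξ : opConv k C ∘ₗ TensorProduct.mk k (Dual k C) (Dual k C) Coalgebra.counit
      = LinearMap.id := LinearMap.ext opConv_counit_tmul
  have ha : LinearMap.mulRight k (1 : A) = LinearMap.id := LinearMap.ext mul_one
  rw [smashMul_tmul_tmul, hξ, ha, TensorProduct.map_id, LinearMap.id_apply]

variable [Module.Finite k C] [Module.Projective k C] {E : Entwining k A C}
  {ψbar : A ⊗[k] Dual k C →ₗ[k] Dual k C ⊗[k] A}

lemma IsFactorisation.psibar_tmul_counit (hfact : IsFactorisation E ψbar) (a : A) :
    ψbar (a ⊗ₜ Coalgebra.counit) = Coalgebra.counit ⊗ₜ a := by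
  refine (dualTensorHom_bijective (R := k)).injective ?_
  rw [hfact.dualTensorHom_psibar]
  ext c
  simpa [evSnd] using E.counit_compat c a

lemma IsFactorisation.psibar_one_tmul (hfact : IsFactorisation E ψbar) (ξ : Dual k C) :
    ψbar (1 ⊗ₜ ξ) = ξ ⊗ₜ 1 := by
  refine (dualTensorHom_bijective (R := k)).injective ?_
  rw [hfact.dualTensorHom_psibar]
  ext c
  simp [E.one_compat]

lemma IsFactorisation.smashMul_counit_tmul_counit_tmul (hfact : IsFactorisation E ψbar)
    (a b : A) :
    smashMul ψbar ((Coalgebra.counit ⊗ₜ a) ⊗ₜ (Coalgebra.counit ⊗ₜ b))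
      = (Coalgebra.counit : Dual k C) ⊗ₜ (a * b) := by
  simp [smashMul_tmul_tmul, hfact.psibar_tmul_counit]

lemma IsFactorisation.smashMul_tmul_one_tmul (hfact : IsFactorisation E ψbar)
    (ξ η : Dual k C) (b : A) :
    smashMul ψbar ((ξ ⊗ₜ 1) ⊗ₜ (η ⊗ₜ b)) = opConv k C (ξ ⊗ₜ η) ⊗ₜ b := by
  simp [smashMul_tmul_tmul, hfact.psibar_one_tmul]

end SmashProduct

section EntwinedToSmash

variable {k A C} {M : Type*} [AddCommGroup M] [Module k M] {act : M ⊗[k] A →ₗ[k] M}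
  {coact : M →ₗ[k] M ⊗[k] C}

lemma inducedSmashAction_map_opConv_mulRight (hact : IsRAction act)
    (hcoact : IsRCoaction coact) (m : M) (ξ : Dual k C) (b : A) (w : Dual k C ⊗[k] A) :
    inducedSmashAction act coact (m ⊗ₜ TensorProduct.map
        (opConv k C ∘ₗ TensorProduct.mk k (Dual k C) (Dual k C) ξ) (LinearMap.mulRight k b) w)
      = act (inducedSmashAction act coact (contractWith ξ (coact m) ⊗ₜ w) ⊗ₜ b) := by
  induction w using TensorProduct.induction_on with
  | zero => simp
  | tmul η a =>
    simp only [TensorProduct.map_tmul, LinearMap.comp_apply, TensorProduct.mk_apply,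
      LinearMap.mulRight_apply, inducedSmashAction_tmul_tmul, hact.act_act,
      hcoact.contractWith_coact_contractWith]
  | add x y hx hy => simp only [map_add, tmul_add, add_tmul, hx, hy]

theorem IsEntwinedModule.isSmashAction_inducedSmashAction {E : Entwining k A C}
    {ψbar : A ⊗[k] Dual k C →ₗ[k] Dual k C ⊗[k] A} (h : IsEntwinedModule E act coact)
    (hfact : IsFactorisation E ψbar) : IsSmashAction ψbar (inducedSmashAction act coact) := by
  have hact := h.1
  have hcoact := h.2.1
  refine ⟨fun m => (hact.inducedSmashAction_tmul_one coact m _).trans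
    (hcoact.contractWith_counit m), ?_⟩
  ext m ξ a η b
  simp only [TensorProduct.AlgebraTensorModule.curry_apply, curry_apply,
    LinearMap.coe_restrictScalars, LinearMap.comp_apply, lTensor_tmul, LinearEquiv.coe_coe,
    TensorProduct.assoc_symm_tmul, rTensor_tmul]
  rw [smashMul_tmul_tmul, inducedSmashAction_map_opConv_mulRight hact hcoact,
    inducedSmashAction_tmul_tmul act coact m, inducedSmashAction_tmul_tmul,
    h.contractWith_coact_act hfact]

end EntwinedToSmash

section SmashToEntwined

variable {k A C} {M : Type*} [AddCommGroup M] [Module k M]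
  {ψbar : A ⊗[k] Dual k C →ₗ[k] Dual k C ⊗[k] A} {actX : M ⊗[k] (Dual k C ⊗[k] A) →ₗ[k] M}

def restrictToA (actX : M ⊗[k] (Dual k C ⊗[k] A) →ₗ[k] M) : M ⊗[k] A →ₗ[k] M :=
  actX ∘ₗ lTensor M (TensorProduct.mk k (Dual k C) A Coalgebra.counit)

@[simp] lemma restrictToA_tmul (m : M) (a : A) :
    restrictToA actX (m ⊗ₜ a) = actX (m ⊗ₜ (Coalgebra.counit ⊗ₜ a)) :=
  rfl

lemma IsSmashAction.act_act (h : IsSmashAction ψbar actX) (m : M) (x y : Dual k C ⊗[k] A) :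
    actX (actX (m ⊗ₜ x) ⊗ₜ y) = actX (m ⊗ₜ smashMul ψbar (x ⊗ₜ y)) := by
  simpa using (LinearMap.congr_fun h.2 (m ⊗ₜ (x ⊗ₜ y))).symm

variable [Module.Finite k C] [Module.Projective k C] {E : Entwining k A C}
  {n : ℕ} {b : Fin n → C} {d : Fin n → Dual k C}

lemma IsSmashAction.isRAction_restrictToA (h : IsSmashAction ψbar actX)
    (hfact : IsFactorisation E ψbar) : IsRAction (restrictToA actX) := by
  refine ⟨h.1, TensorProduct.ext_threefold' fun m a a' => ?_⟩
  simp [h.act_act, hfact.smashMul_counit_tmul_counit_tmul]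

lemma IsSmashAction.isRCoaction (h : IsSmashAction ψbar actX) (hbd : IsDualBasis b d)
    (hfact : IsFactorisation E ψbar) :
    IsRCoaction (coactionOfDualBasis b d (restrictToDual actX)) := by
  refine hbd.isRCoaction (fun m => ?_) (fun m ξ η => ?_)
  · rw [hbd.contractWith_coactionOfDualBasis, restrictToDual_tmul]
    exact h.1 m
  · simp only [hbd.contractWith_coactionOfDualBasis, restrictToDual_tmul, h.act_act,
      hfact.smashMul_tmul_one_tmul]

lemma IsSmashAction.inducedSmashAction_eq (h : IsSmashAction ψbar actX)
    (hbd : IsDualBasis b d) (hfact : IsFactorisation E ψbar) :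
    inducedSmashAction (restrictToA actX) (coactionOfDualBasis b d (restrictToDual actX))
      = actX := by
  refine TensorProduct.ext_threefold' fun m ξ a => ?_
  rw [inducedSmashAction_tmul_tmul, hbd.contractWith_coactionOfDualBasis, restrictToDual_tmul,
    restrictToA_tmul, h.act_act, hfact.smashMul_tmul_one_tmul, opConv_tmul_counit]

theorem IsSmashAction.isEntwinedModule (h : IsSmashAction ψbar actX) (hbd : IsDualBasis b d)
    (hfact : IsFactorisation E ψbar) :
    IsEntwinedModule E (restrictToA actX) (coactionOfDualBasis b d (restrictToDual actX)) := by
  refine hbd.isEntwinedModule hfact (h.isRAction_restrictToA hfact) (h.isRCoaction hbd hfact)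
    fun m a ξ => ?_
  rw [h.inducedSmashAction_eq hbd hfact, hbd.contractWith_coactionOfDualBasis,
    restrictToDual_tmul, restrictToA_tmul, h.act_act, smashMul_counit_tmul_tmul_one]

end SmashToEntwined

section Morphisms

variable {k A C} {M N : Type*} [AddCommGroup M] [Module k M] [AddCommGroup N] [Module k N]
  {actM : M ⊗[k] A →ₗ[k] M} {coactM : M →ₗ[k] M ⊗[k] C}
  {actN : N ⊗[k] A →ₗ[k] N} {coactN : N →ₗ[k] N ⊗[k] C}

theorem IsDualBasis.isEntwinedHom_iff {n : ℕ} {b : Fin n → C} {d : Fin n → Dual k C}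
    (hbd : IsDualBasis b d) (hactM : IsRAction actM) (hcoactM : IsRCoaction coactM)
    (hactN : IsRAction actN) (hcoactN : IsRCoaction coactN) (f : M →ₗ[k] N) :
    (∀ m x, f (inducedSmashAction actM coactM (m ⊗ₜ x))
        = inducedSmashAction actN coactN (f m ⊗ₜ x))
      ↔ IsEntwinedHom actM coactM actN coactN f := by
  constructor
  · intro hf
    refine ⟨TensorProduct.ext' fun m a => ?_, LinearMap.ext fun m => hbd.tensor_ext fun i => ?_⟩
    · simpa [hcoactM.inducedSmashAction_counit_tmul, hcoactN.inducedSmashAction_counit_tmul]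
        using hf m (Coalgebra.counit ⊗ₜ a)
    · simpa [contractWith_rTensor, hactM.inducedSmashAction_tmul_one,
        hactN.inducedSmashAction_tmul_one] using (hf m (d i ⊗ₜ 1)).symm
  · rintro ⟨hA, hC⟩ m x
    induction x using TensorProduct.induction_on with
    | zero => simp
    | tmul ξ a =>
      have hAm := LinearMap.congr_fun hA (contractWith ξ (coactM m) ⊗ₜ a)
      have hCm := LinearMap.congr_fun hC m
      simp only [LinearMap.comp_apply, rTensor_tmul] at hAm hCm
      rw [inducedSmashAction_tmul_tmul, inducedSmashAction_tmul_tmul, hAm,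
        ← contractWith_rTensor, hCm]
    | add x y hx hy => simp only [tmul_add, map_add, hx, hy]

end Morphisms

/-- for `C` f.g. projective, the category of entwined
`(A,C)_ψ`-modules is isomorphic to the category of right `X`-modules,
`X = C^{*op} #_ψ̄ A`. -/
theorem entwined_equiv_smashModules
    [Module.Finite k C] [Module.Projective k C]
    (E : Entwining k A C)
    (ψbar : A ⊗[k] Module.Dual k C →ₗ[k] Module.Dual k C ⊗[k] A)
    (hfact : IsFactorisation E ψbar) :
    -- (1) every entwined module is a right `X`-module via
    -- `m·(ξ⊗a) = m₍₀₎·a ⟨m₍₁₎,ξ⟩`, compatibly with the `A`-action and coaction: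
    (∀ (M : Type) (_ : AddCommGroup M) (_ : Module k M)
      (actM : M ⊗[k] A →ₗ[k] M) (coactM : M →ₗ[k] M ⊗[k] C),
      IsEntwinedModule E actM coactM →
        IsSmashAction ψbar (inducedSmashAction actM coactM) ∧
        (∀ (m : M) (a : A),
          inducedSmashAction actM coactM
            (m ⊗ₜ[k] ((Coalgebra.counit (R := k) (A := C)) ⊗ₜ[k] a))
            = actM (m ⊗ₜ[k] a)) ∧
        (∀ (m : M) (ξ : Module.Dual k C),
          inducedSmashAction actM coactM (m ⊗ₜ[k] (ξ ⊗ₜ[k] (1 : A)))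
            = (TensorProduct.rid k M) ((lTensor M ξ) (coactM m)))) ∧
    -- (2) conversely, every right `X`-module carries a unique entwined module
    -- structure with `A`-action restricted along `A ⊆ X` and coaction determined
    -- by `⟨m₍₁₎, ξ⟩ m₍₀₎ = m·ξ`:
    (∀ (M : Type) (_ : AddCommGroup M) (_ : Module k M)
      (actX : M ⊗[k] (Module.Dual k C ⊗[k] A) →ₗ[k] M),
      IsSmashAction ψbar actX →
        ∃! coactM : M →ₗ[k] M ⊗[k] C,
          IsEntwinedModule E
            (actX ∘ₗ lTensor M
              ((TensorProduct.mk k (Module.Dual k C) A)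
                (Coalgebra.counit (R := k) (A := C))))
            coactM ∧
          (∀ (m : M) (ξ : Module.Dual k C),
            actX (m ⊗ₜ[k] (ξ ⊗ₜ[k] (1 : A)))
              = (TensorProduct.rid k M) ((lTensor M ξ) (coactM m)))) ∧
    -- (3) the correspondence is the identity on morphisms: a `k`-linear map
    -- between entwined modules is `X`-linear iff it is a morphism of entwined
    -- modules:
    (∀ (M : Type) (_ : AddCommGroup M) (_ : Module k M)
      (N : Type) (_ : AddCommGroup N) (_ : Module k N)
      (actM : M ⊗[k] A →ₗ[k] M) (coactM : M →ₗ[k] M ⊗[k] C)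
      (actN : N ⊗[k] A →ₗ[k] N) (coactN : N →ₗ[k] N ⊗[k] C),
      IsEntwinedModule E actM coactM → IsEntwinedModule E actN coactN →
      ∀ f : M →ₗ[k] N,
        ((∀ (m : M) (x : Module.Dual k C ⊗[k] A),
            f (inducedSmashAction actM coactM (m ⊗ₜ[k] x))
              = inducedSmashAction actN coactN (f m ⊗ₜ[k] x))
          ↔ IsEntwinedHom actM coactM actN coactN f)) := by
  obtain ⟨n, b, d, hbd⟩ := exists_isDualBasis (R := k) (V := C)
  refine ⟨fun M _ _ actM coactM h => ?_, fun M _ _ actX hX => ?_,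
    fun M _ _ N _ _ actM coactM actN coactN hM hN f =>
      hbd.isEntwinedHom_iff hM.1 hM.2.1 hN.1 hN.2.1 f⟩
  · exact ⟨h.isSmashAction_inducedSmashAction hfact,
      h.2.1.inducedSmashAction_counit_tmul actM, h.1.inducedSmashAction_tmul_one coactM⟩
  · refine ⟨coactionOfDualBasis b d (restrictToDual actX),
      ⟨hX.isEntwinedModule hbd hfact, fun m ξ => ?_⟩, fun coact ⟨_, hcoact⟩ => ?_⟩
    · exact (hbd.contractWith_coactionOfDualBasis (restrictToDual actX) ξ m).symm
    · exact hbd.eq_coactionOfDualBasis fun m ξ => (hcoact m ξ).symm
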